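/- ₃F₂(1, 1, c; 2, f; 1) = (f − 1) · ∑ₙ₌₀^∞ 1/((f − 1 + n)(f − c + n)), for real f > c > 0 with f > 1. -/

import Mathlib

/-!
The `n`-th term of `₃F₂(1, 1, c; 2, g; 1)` is `(c)ₙ / ((g)ₙ (n + 1))`. Comparing it with the term
`(c)ₙ / (g + 1)ₙ` of `₂F₁(c, 1; g + 1; 1)`, whose sum `g / (g - c)` telescopes, gives the
contiguous relation `g F(g) = (g - 1) F(g + 1) + g / (g - c)` for `F(g) = ₃F₂(1, 1, c; 2, g; 1)`.
Thus `F(g) / (g - 1) - F(g + 1) / g = 1 / ((g - 1) (g - c))`; summing over `g = f, f + 1, …`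
telescopes, and the boundary term `F(f + k) / (f + k - 1)` tends to `0` because `F` decreases
in `g`.
-/

open Real

/-- Pochhammer symbol (rising factorial) for a real argument. -/
noncomputable def poch (q : ℝ) (n : ℕ) : ℝ := ∏ i ∈ Finset.range n, (q + i)

/-- Gauss hypergeometric function ₂F₁, defined by its power series. -/
noncomputable def hyp2F1 (a b c x : ℝ) : ℝ :=
  ∑' n : ℕ, poch a n * poch b n / (poch c n * n.factorial) * x ^ n

/-- Generalized hypergeometric function ₃F₂, defined by its power series. -/
noncomputable def hyp3F2 (a₁ a₂ a₃ b₁ b₂ x : ℝ) : ℝ :=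
  ∑' n : ℕ, poch a₁ n * poch a₂ n * poch a₃ n / (poch b₁ n * poch b₂ n * n.factorial) * x ^ n

open Filter Topology Finset

lemma poch_succ (q : ℝ) (n : ℕ) : poch q (n + 1) = poch q n * (q + n) :=
  prod_range_succ _ n

lemma poch_succ' (q : ℝ) (n : ℕ) : poch q (n + 1) = q * poch (q + 1) n := by
  rw [poch, prod_range_succ', poch, mul_comm]
  push_cast
  simp only [add_zero, add_assoc, add_comm (1 : ℝ)]

lemma poch_pos {q : ℝ} (hq : 0 < q) (n : ℕ) : 0 < poch q n :=
  prod_pos fun _ _ => by positivity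

lemma poch_le_poch {q q' : ℝ} (hq : 0 ≤ q) (h : q ≤ q') (n : ℕ) : poch q n ≤ poch q' n :=
  prod_le_prod (fun _ _ => by positivity) fun _ _ => by linarith

lemma poch_one (n : ℕ) : poch 1 n = n.factorial := by
  rw [poch, ← prod_range_add_one_eq_factorial]
  push_cast
  simp only [add_comm (1 : ℝ)]

lemma poch_two (n : ℕ) : poch 2 n = (n + 1).factorial := by
  rw [← poch_one, poch_succ', one_add_one_eq_two, one_mul]

lemma Antitone.hasSum_sub_succ {u : ℕ → ℝ} (hu : Antitone u) {L : ℝ}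
    (h : Tendsto u atTop (𝓝 L)) : HasSum (fun n => u n - u (n + 1)) (u 0 - L) := by
  rw [hasSum_iff_tendsto_nat_of_nonneg fun n => sub_nonneg.2 (hu n.le_succ)]
  simp only [sum_range_sub']
  exact tendsto_const_nhds.sub h

noncomputable def pochRatio (c b : ℝ) (n : ℕ) : ℝ := poch c n / poch b n

section pochRatio

variable {c b : ℝ}

lemma pochRatio_zero : pochRatio c b 0 = 1 := by simp [pochRatio, poch]

lemma pochRatio_pos (hc : 0 < c) (hb : 0 < b) (n : ℕ) : 0 < pochRatio c b n :=
  div_pos (poch_pos hc n) (poch_pos hb n)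

lemma pochRatio_sub_succ (hb : 0 < b) (n : ℕ) :
    pochRatio c b n - pochRatio c b (n + 1) = pochRatio c b n * ((b - c) / (b + n)) := by
  have := (poch_pos hb n).ne'
  have : b + n ≠ 0 := by positivity
  rw [pochRatio, pochRatio, poch_succ, poch_succ]
  field_simp
  ring

lemma pochRatio_add_one_right (hb : 0 < b) (n : ℕ) :
    pochRatio c (b + 1) n = pochRatio c b n * (b / (b + n)) := by
  have h : b * poch (b + 1) n = poch b n * (b + n) := by rw [← poch_succ', poch_succ]
  have := (poch_pos hb n).ne'
  have := (poch_pos (by linarith : 0 < b + 1) n).ne'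
  have : b + n ≠ 0 := by positivity
  rw [pochRatio, pochRatio, div_mul_div_comm, div_eq_div_iff (by assumption) (by positivity), ← h]
  ring

lemma pochRatio_antitone (hc : 0 < c) (hcb : c ≤ b) : Antitone (pochRatio c b) := by
  have hb := hc.trans_le hcb
  refine antitone_nat_of_succ_le fun n => sub_nonneg.1 ?_
  rw [pochRatio_sub_succ hb]
  exact mul_nonneg (pochRatio_pos hc hb n).le (div_nonneg (by linarith) (by positivity))

lemma pochRatio_le_pochRatio_of_le {b' : ℝ} (hc : 0 < c) (hb : 0 < b) (hbb' : b ≤ b')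
    (n : ℕ) :
    pochRatio c b' n ≤ pochRatio c b n :=
  div_le_div_of_nonneg_left (poch_pos hc n).le (poch_pos hb n) (poch_le_poch hb.le hbb' n)

/-- If the limit `L` were positive, the telescoping sum of the differences
`pochRatio c b n * ((b - c) / (b + n)) ≥ L * (b - c) / (b + n)` would bound a harmonic series. -/
lemma tendsto_pochRatio_atTop (hc : 0 < c) (hcb : c < b) :
    Tendsto (pochRatio c b) atTop (𝓝 0) := by
  have hb := hc.trans hcb
  have hbdd : BddBelow (Set.range (pochRatio c b)) :=
    ⟨0, Set.forall_mem_range.2 fun n => (pochRatio_pos hc hb n).le⟩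
  obtain ⟨L, hL0, hLle, hlim⟩ : ∃ L, 0 ≤ L ∧ (∀ n, L ≤ pochRatio c b n) ∧
      Tendsto (pochRatio c b) atTop (𝓝 L) :=
    ⟨_, le_ciInf fun n => (pochRatio_pos hc hb n).le, ciInf_le hbdd,
      tendsto_atTop_ciInf (pochRatio_antitone hc hcb.le) hbdd⟩
  obtain rfl | hL := hL0.eq_or_lt
  · exact hlim
  have hsum : Summable fun n : ℕ => L * (b - c) * (1 / |n + b| ^ (1 : ℝ)) := by
    refine summable_of_sum_range_le (c := 1) (fun n => by positivity) fun N => ?_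
    calc ∑ n ∈ range N, L * (b - c) * (1 / |n + b| ^ (1 : ℝ))
        ≤ ∑ n ∈ range N, (pochRatio c b n - pochRatio c b (n + 1)) := by
          refine sum_le_sum fun n _ => ?_
          rw [pochRatio_sub_succ hb, Real.rpow_one, abs_of_pos (by positivity), add_comm,
            mul_one_div, mul_div_assoc]
          exact mul_le_mul_of_nonneg_right (hLle n) (div_nonneg (by linarith) (by positivity))
      _ = 1 - pochRatio c b N := by rw [sum_range_sub', pochRatio_zero]
      _ ≤ 1 := by linarith [pochRatio_pos hc hb N]
  have := (hsum.mul_left (L * (b - c))⁻¹).congr fun n =>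
    inv_mul_cancel_left₀ (mul_pos hL (by linarith)).ne' _
  exact absurd ((Real.summable_one_div_nat_add_rpow b 1).1 this) (lt_irrefl 1)

/-- Gauss's summation of `₂F₁(c, 1; b + 1; 1)`. -/
theorem hasSum_pochRatio (hc : 0 < c) (hcb : c < b) :
    HasSum (pochRatio c (b + 1)) (b / (b - c)) := by
  have hb := hc.trans hcb
  have htel := ((pochRatio_antitone hc hcb.le).hasSum_sub_succ
    (tendsto_pochRatio_atTop hc hcb)).mul_left (b / (b - c))
  rw [pochRatio_zero, sub_zero, mul_one] at htel
  refine htel.congr_fun fun n => ?_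
  rw [pochRatio_sub_succ hb, pochRatio_add_one_right hb]
  have : b - c ≠ 0 := by linarith
  field_simp

end pochRatio

section hyp3F2

variable {c g : ℝ}

lemma hyp3F2_one_one_two_eq_tsum (c g : ℝ) :
    hyp3F2 1 1 c 2 g 1 = ∑' n : ℕ, pochRatio c g n / (n + 1) := by
  refine tsum_congr fun n => ?_
  have : (n.factorial : ℝ) ≠ 0 := by positivity
  rw [poch_one, poch_two, Nat.factorial_succ, one_pow, mul_one, pochRatio]
  push_cast
  field_simp

lemma hyp3F2_one_one_two_nonneg (hc : 0 < c) (hg : 0 < g) : 0 ≤ hyp3F2 1 1 c 2 g 1 := by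
  rw [hyp3F2_one_one_two_eq_tsum]
  exact tsum_nonneg fun n => div_nonneg (pochRatio_pos hc hg n).le (by positivity)

lemma pochRatio_div_succ_le (hc : 0 < c) (hg : 1 ≤ g) (n : ℕ) :
    pochRatio c g n / (n + 1) ≤ pochRatio c (g + 1) n := by
  rw [pochRatio_add_one_right (by linarith), div_eq_mul_one_div]
  refine mul_le_mul_of_nonneg_left ?_ (pochRatio_pos hc (by linarith) n).le
  rw [div_le_div_iff₀ (by positivity) (by positivity)]
  nlinarith [(n.cast_nonneg : (0 : ℝ) ≤ n)]

lemma summable_pochRatio_div_succ (hc : 0 < c) (hcg : c < g) (hg : 1 ≤ g) :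
    Summable fun n : ℕ => pochRatio c g n / (n + 1) :=
  (hasSum_pochRatio hc hcg).summable.of_nonneg_of_le
    (fun n => div_nonneg (pochRatio_pos hc (by linarith) n).le (by positivity))
    (pochRatio_div_succ_le hc hg)

lemma hyp3F2_contiguous (hc : 0 < c) (hcg : c < g) (hg : 1 ≤ g) :
    g * hyp3F2 1 1 c 2 g 1 = (g - 1) * hyp3F2 1 1 c 2 (g + 1) 1 + g / (g - c) := by
  have hterm (n : ℕ) : g * (pochRatio c g n / (n + 1)) =
      (g - 1) * (pochRatio c (g + 1) n / (n + 1)) + pochRatio c (g + 1) n := by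
    rw [pochRatio_add_one_right (by linarith)]
    have : g + n ≠ 0 := by positivity
    field_simp
    ring
  have hsum := summable_pochRatio_div_succ hc (by linarith : c < g + 1) (by linarith)
  rw [hyp3F2_one_one_two_eq_tsum, hyp3F2_one_one_two_eq_tsum, ← tsum_mul_left, ← tsum_mul_left,
    ← (hasSum_pochRatio hc hcg).tsum_eq, ← Summable.tsum_add (hsum.mul_left _)
    (hasSum_pochRatio hc hcg).summable]
  exact tsum_congr hterm

lemma hyp3F2_one_one_two_le_of_le {g' : ℝ} (hc : 0 < c) (hcg : c < g) (hg : 1 ≤ g)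
    (hgg' : g ≤ g') :
    hyp3F2 1 1 c 2 g' 1 ≤ hyp3F2 1 1 c 2 g 1 := by
  rw [hyp3F2_one_one_two_eq_tsum, hyp3F2_one_one_two_eq_tsum]
  refine Summable.tsum_le_tsum (fun n => ?_) (summable_pochRatio_div_succ hc
    (hcg.trans_le hgg') (hg.trans hgg')) (summable_pochRatio_div_succ hc hcg hg)
  gcongr
  exact pochRatio_le_pochRatio_of_le hc (by linarith) hgg' n

end hyp3F2

theorem hasSum_hyp3F2_div {c f : ℝ} (hc : 0 < c) (hcf : c < f) (hf : 1 < f) :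
    HasSum (fun n : ℕ => 1 / ((f - 1 + n) * (f - c + n))) (hyp3F2 1 1 c 2 f 1 / (f - 1)) := by
  set u : ℕ → ℝ := fun k => hyp3F2 1 1 c 2 (f + k) 1 / (f + k - 1)
  have hstep (k : ℕ) : u k - u (k + 1) = 1 / ((f - 1 + k) * (f - c + k)) := by
    obtain ⟨g, hg⟩ : ∃ g, g = f + k := ⟨_, rfl⟩
    have hk : (0 : ℝ) ≤ k := k.cast_nonneg
    have h := hyp3F2_contiguous hc (by linarith : c < g) (by linarith)
    simp only [u, Nat.cast_succ, ← add_assoc, ← hg]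
    rw [show f - 1 + k = g - 1 by linarith, show f - c + k = g - c by linarith,
      add_sub_cancel_right]
    have : g - 1 ≠ 0 := by linarith
    have : g ≠ 0 := by linarith
    have : g - c ≠ 0 := by linarith
    field_simp at h ⊢
    linear_combination h
  have hanti : Antitone u := antitone_nat_of_succ_le fun k => sub_nonneg.1 <| by
    rw [hstep]
    have hk : (0 : ℝ) ≤ k := k.cast_nonneg
    exact div_nonneg zero_le_one (mul_nonneg (by linarith) (by linarith))
  have hlim : Tendsto u atTop (𝓝 0) := by
    have hden : Tendsto (fun k : ℕ => f + k - 1) atTop atTop :=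
      tendsto_atTop_add_const_right _ _
        (tendsto_atTop_add_const_left _ _ tendsto_natCast_atTop_atTop)
    refine squeeze_zero (fun k => ?_) (fun k => ?_)
      ((tendsto_const_nhds (x := hyp3F2 1 1 c 2 f 1)).div_atTop hden)
    all_goals have hk : (0 : ℝ) ≤ k := k.cast_nonneg
    · exact div_nonneg (hyp3F2_one_one_two_nonneg hc (by linarith)) (by linarith)
    · exact div_le_div_of_nonneg_right
        (hyp3F2_one_one_two_le_of_le hc hcf hf.le (le_add_of_nonneg_right hk)) (by linarith)
  have htel := hanti.hasSum_sub_succ hlim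
  simp only [u, Nat.cast_zero, add_zero, sub_zero] at htel
  exact htel.congr_fun fun k => (hstep k).symm

theorem hyp3F2_sum_formula (c f : ℝ) (hc : 0 < c) (hcf : c < f) (hf : 1 < f) :
    hyp3F2 1 1 c 2 f 1 = (f - 1) * ∑' n : ℕ, 1 / ((f - 1 + n) * (f - c + n)) := by
  rw [(hasSum_hyp3F2_div hc hcf hf).tsum_eq, mul_div_cancel₀ _ (by linarith)]
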